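/- arXiv:1910.04403 — 3 statements merged into one kernel-verified Lean document; each statement's English description precedes it below -/
import Mathlib

section
/- Let D, H > 0 with D > 2H/√3, and let ε₀ = √(−(D²/4 + H²) + √(D⁴/4 + H²D²)). Then 0 < ε₀ ≤ D/2. -/
theorem stmt_3 (D H : ℝ) (hD : 0 < D) (hH : 0 < H) (hDH : D > 2 * H / Real.sqrt 3) :
    0 < Real.sqrt (-(D ^ 2 / 4 + H ^ 2) + Real.sqrt (D ^ 4 / 4 + H ^ 2 * D ^ 2)) ∧
    Real.sqrt (-(D ^ 2 / 4 + H ^ 2) + Real.sqrt (D ^ 4 / 4 + H ^ 2 * D ^ 2)) ≤ D / 2 := by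
  have h3 : (0:ℝ) < Real.sqrt 3 := Real.sqrt_pos.mpr (by norm_num)
  have h3sq : Real.sqrt 3 ^ 2 = 3 := Real.sq_sqrt (by norm_num)
  have h1 : 2 * H < D * Real.sqrt 3 := (div_lt_iff₀ h3).mp hDH
  have h2 : 4 * H ^ 2 < 3 * D ^ 2 := by nlinarith [h1, hH.le, h3.le]
  have hinner : (0:ℝ) ≤ D ^ 4 / 4 + H ^ 2 * D ^ 2 := by positivity
  set S := Real.sqrt (D ^ 4 / 4 + H ^ 2 * D ^ 2) with hSdef
  have hSsq : S ^ 2 = D ^ 4 / 4 + H ^ 2 * D ^ 2 := Real.sq_sqrt hinner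
  have hSnn : 0 ≤ S := Real.sqrt_nonneg _
  have hgt : D ^ 2 / 4 + H ^ 2 < S := by nlinarith [sq_nonneg (S + (D ^ 2 / 4 + H ^ 2))]
  constructor
  · exact Real.sqrt_pos.mpr (by linarith)
  · have hle : S ≤ D ^ 2 / 2 + H ^ 2 := by
      nlinarith [sq_nonneg (S + (D ^ 2 / 2 + H ^ 2)), sq_nonneg H]
    have : -(D ^ 2 / 4 + H ^ 2) + S ≤ (D / 2) ^ 2 := by nlinarith
    calc Real.sqrt (-(D ^ 2 / 4 + H ^ 2) + S) ≤ Real.sqrt ((D / 2) ^ 2) :=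
          Real.sqrt_le_sqrt this
      _ = D / 2 := Real.sqrt_sq (by positivity)
end

section
/- Let D, H > 0 and d_min ≥ 0, and define φ(x) = 1/((x+D/2)² + H²) + 1/((x−D/2)² + H²). Consider maximizing φ(x) over x ≥ d_min/2. (i) If D ≤ 2H/√3, the maximum is attained at x* = d_min/2. (ii) If D > 2H/√3, the maximum is attained at x* = max(ε₀, d_min/2), where ε₀ = √(−(D²/4 + H²) + √(D⁴/4 + H²D²)). -/
/-!
Write `φ = harvested D H` and `c = D²/4 + H²`. The two denominators are `x² + c ± D x`, and
`φ x ≤ φ y` is equivalent to `((x² + c)(y² + c) - D² c)(x² - y²) ≥ 0`. Hence `φ` is antitone on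
`{y ≥ 0 | y² + c ≥ D √c}`, and when `D √c ≥ c` the point `ε₀`, where `ε₀² + c = D √c`, is a global
maximum, since there the criterion reads `D √c (x² - ε₀²)² ≥ 0`. The threshold `D = 2H/√3` is
exactly where `D √c = c`.
-/

open Real

noncomputable def harvested (D H x : ℝ) : ℝ :=
  1 / ((x + D / 2) ^ 2 + H ^ 2) + 1 / ((x - D / 2) ^ 2 + H ^ 2)

section Harvested

variable {D H : ℝ}

theorem harvested_le_harvested_of_nonneg (hH : 0 < H) {x y : ℝ}
    (h : 0 ≤ ((x ^ 2 + (D ^ 2 / 4 + H ^ 2)) * (y ^ 2 + (D ^ 2 / 4 + H ^ 2)) -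
        D ^ 2 * (D ^ 2 / 4 + H ^ 2)) * (x ^ 2 - y ^ 2)) :
    harvested D H x ≤ harvested D H y := by
  have p1 : 0 < (x + D / 2) ^ 2 + H ^ 2 := by positivity
  have p2 : 0 < (x - D / 2) ^ 2 + H ^ 2 := by positivity
  have p3 : 0 < (y + D / 2) ^ 2 + H ^ 2 := by positivity
  have p4 : 0 < (y - D / 2) ^ 2 + H ^ 2 := by positivity
  unfold harvested
  rw [div_add_div _ _ p1.ne' p2.ne', div_add_div _ _ p3.ne' p4.ne',
    div_le_div_iff₀ (by positivity) (by positivity)]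
  linear_combination 2 * h

theorem harvested_le_harvested_of_le (hD : 0 ≤ D) (hH : 0 < H) {x y : ℝ} (hy : 0 ≤ y)
    (hyx : y ≤ x) (hpeak : D * √(D ^ 2 / 4 + H ^ 2) ≤ y ^ 2 + (D ^ 2 / 4 + H ^ 2)) :
    harvested D H x ≤ harvested D H y := by
  have hsq : y ^ 2 ≤ x ^ 2 := pow_le_pow_left₀ hy hyx 2
  have hDc : (D * √(D ^ 2 / 4 + H ^ 2)) ^ 2 = D ^ 2 * (D ^ 2 / 4 + H ^ 2) := by
    rw [mul_pow, sq_sqrt (by positivity)]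
  have hprod : (D * √(D ^ 2 / 4 + H ^ 2)) ^ 2 ≤
      (x ^ 2 + (D ^ 2 / 4 + H ^ 2)) * (y ^ 2 + (D ^ 2 / 4 + H ^ 2)) := by
    rw [sq]; exact mul_le_mul (by linarith) hpeak (by positivity) (by positivity)
  exact harvested_le_harvested_of_nonneg hH (mul_nonneg (by linarith) (by linarith))

theorem harvested_le_harvested_peak (hH : 0 < H) {ε : ℝ}
    (hε : ε ^ 2 + (D ^ 2 / 4 + H ^ 2) = D * √(D ^ 2 / 4 + H ^ 2)) (x : ℝ) :
    harvested D H x ≤ harvested D H ε := by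
  apply harvested_le_harvested_of_nonneg hH
  have hc : √(D ^ 2 / 4 + H ^ 2) ^ 2 = D ^ 2 / 4 + H ^ 2 := sq_sqrt (by positivity)
  have hc0 : 0 ≤ D ^ 2 / 4 + H ^ 2 := by positivity
  generalize D ^ 2 / 4 + H ^ 2 = c at hε hc hc0 ⊢
  have hpeak : 0 ≤ D * √c := by rw [← hε]; positivity
  have key : ((x ^ 2 + c) * (ε ^ 2 + c) - D ^ 2 * c) * (x ^ 2 - ε ^ 2) =
      D * √c * (x ^ 2 - ε ^ 2) ^ 2 := by
    rw [hε]; linear_combination (x ^ 2 - ε ^ 2) * (D * √c * hε + D ^ 2 * hc)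
  rw [key]
  positivity

theorem le_two_mul_div_sqrt_three_iff (hD : 0 ≤ D) (hH : 0 < H) :
    D ≤ 2 * H / √3 ↔ D * √(D ^ 2 / 4 + H ^ 2) ≤ D ^ 2 / 4 + H ^ 2 := by
  have hc : 0 < D ^ 2 / 4 + H ^ 2 := by positivity
  rw [← le_div_iff₀ (sqrt_pos.2 hc), div_sqrt, le_sqrt hD hc.le, le_div_iff₀ (by positivity),
    ← pow_le_pow_iff_left₀ (by positivity) (by positivity) two_ne_zero (M₀ := ℝ),
    mul_pow, sq_sqrt (by norm_num : (0 : ℝ) ≤ 3)]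
  constructor <;> intro h <;> linarith

theorem sq_sqrt_peak_add (hD : 0 ≤ D)
    (hpeak : D ^ 2 / 4 + H ^ 2 ≤ D * √(D ^ 2 / 4 + H ^ 2)) :
    √(-(D ^ 2 / 4 + H ^ 2) + √(D ^ 4 / 4 + H ^ 2 * D ^ 2)) ^ 2 + (D ^ 2 / 4 + H ^ 2) =
      D * √(D ^ 2 / 4 + H ^ 2) := by
  rw [show D ^ 4 / 4 + H ^ 2 * D ^ 2 = D ^ 2 * (D ^ 2 / 4 + H ^ 2) by ring,
    sqrt_mul (sq_nonneg D), sqrt_sq hD, sq_sqrt (by linarith)]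
  ring

end Harvested

theorem stmt_4 (D H dmin : ℝ) (hD : 0 < D) (hH : 0 < H) (hd : 0 ≤ dmin) :
    ((D ≤ 2 * H / Real.sqrt 3 →
      ∀ x : ℝ, dmin / 2 ≤ x →
        1 / ((x + D / 2) ^ 2 + H ^ 2) + 1 / ((x - D / 2) ^ 2 + H ^ 2) ≤
          1 / ((dmin / 2 + D / 2) ^ 2 + H ^ 2) + 1 / ((dmin / 2 - D / 2) ^ 2 + H ^ 2))) ∧
    (D > 2 * H / Real.sqrt 3 →
      ∀ x : ℝ, dmin / 2 ≤ x →
        1 / ((x + D / 2) ^ 2 + H ^ 2) + 1 / ((x - D / 2) ^ 2 + H ^ 2) ≤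
          1 / ((max (Real.sqrt (-(D ^ 2 / 4 + H ^ 2) + Real.sqrt (D ^ 4 / 4 + H ^ 2 * D ^ 2))) (dmin / 2) + D / 2) ^ 2 + H ^ 2) +
          1 / ((max (Real.sqrt (-(D ^ 2 / 4 + H ^ 2) + Real.sqrt (D ^ 4 / 4 + H ^ 2 * D ^ 2))) (dmin / 2) - D / 2) ^ 2 + H ^ 2)) := by
  refine ⟨fun hsmall x hx => ?_, fun hlarge x hx => ?_⟩
  · have hpeak := (le_two_mul_div_sqrt_three_iff hD.le hH).1 hsmall
    exact harvested_le_harvested_of_le hD.le hH (by positivity) hx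
      (hpeak.trans (le_add_of_nonneg_left (sq_nonneg _)))
  · have hpeak : D ^ 2 / 4 + H ^ 2 ≤ D * √(D ^ 2 / 4 + H ^ 2) :=
      le_of_not_ge fun h => hlarge.not_ge ((le_two_mul_div_sqrt_three_iff hD.le hH).2 h)
    have hε := sq_sqrt_peak_add hD.le hpeak
    set ε := √(-(D ^ 2 / 4 + H ^ 2) + √(D ^ 4 / 4 + H ^ 2 * D ^ 2))
    rcases lt_or_ge x (max ε (dmin / 2)) with hxm | hmx
    · rw [max_eq_left (by by_contra! h; rw [max_eq_right h.le] at hxm; linarith)]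
      exact harvested_le_harvested_peak hH hε x
    · refine harvested_le_harvested_of_le hD.le hH ((sqrt_nonneg _).trans (le_max_left _ _)) hmx ?_
      have := pow_le_pow_left₀ (sqrt_nonneg _) (le_max_left ε (dmin / 2)) 2
      linarith
end

section
/- Let D, H > 0 with D ≤ 2H/√3, and let d_min ≥ 0. Then the function ψ(x) = 1/((x+D/2)² + H²) + 1/((x−D/2)² + H²) restricted to x ≥ d_min/2 satisfies ψ(x) ≤ ψ(d_min/2) for all x ≥ d_min/2; that is, in the CoMP uplink the common-rate-optimal symmetric hovering displacement is x* = d_min/2 when the devices are close. -/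
/-!
Write `L = c² + K`. Since `((x + c)² + K)((x - c)² + K) = (x² + L)² - 4c²x²`, clearing denominators gives
`ψ(a) - ψ(x) = 2 (x² - a²) ((a² + L)(x² + L) - 4c²L) / (positive)`,
and `(a² + L)(x² + L) ≥ L² ≥ 4c²L` as soon as `L ≥ 4c²`, i.e. `K ≥ 3c²`. With `c = D/2` and `K = H²`
this is exactly the condition `D ≤ 2H/√3`.
-/

open Set

/-- `ψ` of the paper, for devices at `±c` and squared altitude `K`. -/
noncomputable def pairGain (c K x : ℝ) : ℝ :=
  1 / ((x + c) ^ 2 + K) + 1 / ((x - c) ^ 2 + K)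

section pairGain

variable {c K : ℝ}

theorem pairGain_sub_pairGain (hK : 0 < K) (a x : ℝ) :
    pairGain c K a - pairGain c K x =
      2 * (x ^ 2 - a ^ 2) * ((a ^ 2 + c ^ 2 + K) * (x ^ 2 + c ^ 2 + K) - 4 * c ^ 2 * (c ^ 2 + K)) /
        (((a + c) ^ 2 + K) * ((a - c) ^ 2 + K) * ((x + c) ^ 2 + K) * ((x - c) ^ 2 + K)) := by
  have hpos : ∀ t : ℝ, t ^ 2 + K ≠ 0 := fun t => by positivity
  unfold pairGain
  field_simp [hpos (a + c), hpos (a - c), hpos (x + c), hpos (x - c)]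
  ring

theorem pairGain_le_pairGain (hK : 0 < K) (hcK : 3 * c ^ 2 ≤ K) {a x : ℝ} (hax : a ^ 2 ≤ x ^ 2) :
    pairGain c K x ≤ pairGain c K a := by
  rw [← sub_nonneg, pairGain_sub_pairGain hK]
  have hL : 4 * c ^ 2 * (c ^ 2 + K) ≤ (a ^ 2 + c ^ 2 + K) * (x ^ 2 + c ^ 2 + K) :=
    calc 4 * c ^ 2 * (c ^ 2 + K) ≤ (c ^ 2 + K) * (c ^ 2 + K) := by nlinarith [sq_nonneg c]
      _ ≤ (a ^ 2 + c ^ 2 + K) * (x ^ 2 + c ^ 2 + K) := by gcongr <;> nlinarith [sq_nonneg a, sq_nonneg x]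
  apply div_nonneg
  · exact mul_nonneg (mul_nonneg zero_le_two (sub_nonneg.2 hax)) (sub_nonneg.2 hL)
  · positivity

theorem pairGain_antitoneOn (hK : 0 < K) (hcK : 3 * c ^ 2 ≤ K) : AntitoneOn (pairGain c K) (Ici 0) :=
  fun _ ha _ _ hax => pairGain_le_pairGain hK hcK (pow_le_pow_left₀ ha hax 2)

end pairGain

theorem three_mul_sq_half_le_sq_of_le_div_sqrt_three {D H : ℝ} (hD : 0 ≤ D)
    (hDH : D ≤ 2 * H / Real.sqrt 3) : 3 * (D / 2) ^ 2 ≤ H ^ 2 := by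
  have hsqrt : D * Real.sqrt 3 ≤ 2 * H := (le_div_iff₀ (by positivity)).1 hDH
  have hsq := pow_le_pow_left₀ (by positivity) hsqrt 2
  rw [mul_pow, Real.sq_sqrt zero_le_three] at hsq
  linarith

theorem stmt_15 (D H dmin : ℝ) (hD : 0 < D) (hH : 0 < H) (hd : 0 ≤ dmin)
    (hDH : D ≤ 2 * H / Real.sqrt 3) :
    ∀ x : ℝ, dmin / 2 ≤ x →
      1 / ((x + D / 2) ^ 2 + H ^ 2) + 1 / ((x - D / 2) ^ 2 + H ^ 2) ≤
        1 / ((dmin / 2 + D / 2) ^ 2 + H ^ 2) + 1 / ((dmin / 2 - D / 2) ^ 2 + H ^ 2) := by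
  intro x hx
  have hdmin : (0 : ℝ) ≤ dmin / 2 := by positivity
  exact pairGain_antitoneOn (by positivity) (three_mul_sq_half_le_sq_of_le_div_sqrt_three hD.le hDH)
    hdmin (hdmin.trans hx) hx
end
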